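/- arXiv:1207.5086 — 3 statements merged into one kernel-verified Lean document; each statement's English description precedes it below -/
import Mathlib

section
/- For discrete probability distributions μ1 on a finite set S1 and μ2 on a finite set S2, and a relation R ⊆ S1 × S2, there exists a weight function w : S1 × S2 → [0,1] with (i) μ1(s1) = Σ_{s2} w(s1,s2) for all s1, (ii) μ2(s2) = Σ_{s1} w(s1,s2) for all s2, and (iii) w(s1,s2) > 0 implies (s1,s2) ∈ R, if and only if for every subset S ⊆ supp(μ1), μ1(S) ≤ μ2(R(S)), where R(S) = {s2 | ∃ s1 ∈ S, (s1,s2) ∈ R}. -/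
open Classical

structure FDist (S : Type) [Fintype S] where
  pmf : S → ℝ
  nonneg : ∀ s, 0 ≤ pmf s
  sum_one : ∑ s, pmf s = 1

namespace FDist

variable {S S1 S2 : Type} [Fintype S] [Fintype S1] [Fintype S2]

noncomputable def prob (μ : FDist S) (T : Set S) : ℝ :=
  ∑ s, if s ∈ T then μ.pmf s else 0

def supp (μ : FDist S) : Set S := {s | 0 < μ.pmf s}

noncomputable def dirac (s : S) : FDist S where
  pmf t := if t = s then 1 else 0
  nonneg t := by (try dsimp only); split <;> norm_num
  sum_one := by simp

noncomputable def prod (μ1 : FDist S1) (μ2 : FDist S2) : FDist (S1 × S2) where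
  pmf p := μ1.pmf p.1 * μ2.pmf p.2
  nonneg p := mul_nonneg (μ1.nonneg _) (μ2.nonneg _)
  sum_one := by
    rw [Fintype.sum_prod_type]
    simp_rw [← Finset.mul_sum, μ2.sum_one, mul_one]
    exact μ1.sum_one

end FDist

/-- Image of a set under a relation: `R(T) = {s2 | ∃ s1 ∈ T, (s1,s2) ∈ R}`. -/
def relImage {S1 S2 : Type} (R : Set (S1 × S2)) (T : Set S1) : Set S2 :=
  {s2 | ∃ s1 ∈ T, (s1, s2) ∈ R}

/-- The lifting `μ1 ⊑_R μ2` of a relation on states to distributions,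
via the Hall-type subset condition. -/
def liftRel {S1 S2 : Type} [Fintype S1] [Fintype S2]
    (R : Set (S1 × S2)) (μ1 : FDist S1) (μ2 : FDist S2) : Prop :=
  ∀ T ⊆ μ1.supp, μ1.prob T ≤ μ2.prob (relImage R T)

/-- A (finite, finitely-branching) labeled probabilistic transition system. -/
structure LPTS (S : Type) (Act : Type) [Fintype S] where
  start : S
  alpha : Set Act
  trans : S → Act → Set (FDist S)
  trans_mem : ∀ s a μ, μ ∈ trans s a → a ∈ alpha
  finite_trans : ∀ s a, (trans s a).Finite

/-- `R` is a strong simulation between `L1` and `L2`. -/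
def StrongSim {S1 S2 Act : Type} [Fintype S1] [Fintype S2]
    (L1 : LPTS S1 Act) (L2 : LPTS S2 Act) (R : Set (S1 × S2)) : Prop :=
  ∀ s1 s2, (s1, s2) ∈ R → ∀ a μ1, μ1 ∈ L1.trans s1 a →
    ∃ μ2 ∈ L2.trans s2 a, liftRel R μ1 μ2

/-- `L2` strongly simulates `L1` (written `L1 ≼ L2`). -/
def Sim {S1 S2 Act : Type} [Fintype S1] [Fintype S2]
    (L1 : LPTS S1 Act) (L2 : LPTS S2 Act) : Prop :=
  ∃ R, StrongSim L1 L2 R ∧ (L1.start, L2.start) ∈ R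

/-- `μ1 ⊑_R μ2` via existence of a weight function with marginals `μ1`, `μ2`
and support contained in `R`. -/
def hasWeight {S1 S2 : Type} [Fintype S1] [Fintype S2]
    (R : Set (S1 × S2)) (μ1 : FDist S1) (μ2 : FDist S2) : Prop :=
  ∃ w : S1 × S2 → ℝ,
    (∀ p, 0 ≤ w p ∧ w p ≤ 1) ∧
    (∀ s1, μ1.pmf s1 = ∑ s2, w (s1, s2)) ∧
    (∀ s2, μ2.pmf s2 = ∑ s1, w (s1, s2)) ∧
    (∀ p, 0 < w p → p ∈ R)

/-!
Necessity is double counting: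
`μ1(T) = ∑_{s ∈ T} ∑_t w(s,t) ≤ ∑_{t ∈ R(T)} ∑_s w(s,t) = μ2(R(T))`.

For sufficiency, relax the problem to nonnegative vectors `a`, `b` and weights whose rows sum
to `a` and whose columns sum to at most `b`, and induct on the total size of the supports of `a`
and `b`. Call `T` critical if it is tight, `a(T) = b(R(T))`, and splits the support of `a`
nontrivially. For critical `T`, Hall's condition holds separately for `a` on `T` against `b` on
`R(T)` and for `a` off `T` against `b` off `R(T)`; both are smaller instances. To make progress,
pick `s` with `a s > 0` and an `R`-neighbour `t` with `b t > 0`, and move the amount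
`ε = min (a s, b t, slack of every T avoiding s with t ∈ R(T))` from `a s` and `b t` onto the
weight of `(s, t)`. Hall's condition survives, and either `a s` or `b t` drops to zero or some
set becomes critical. Since both distributions have total mass one, the column sums of the
weight found are exactly `μ2`.
-/

open Finset Function

-- `FDist.prob μ` is definitionally `mass μ.pmf`.
noncomputable def mass {S : Type*} [Fintype S] (a : S → ℝ) (T : Set S) : ℝ :=
  ∑ s, T.indicator a s

section Mass

variable {S : Type*} [Fintype S] {a : S → ℝ} {T U : Set S}

lemma mass_mono (ha : ∀ s, 0 ≤ a s) (h : T ⊆ U) : mass a T ≤ mass a U :=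
  sum_le_sum fun s _ => Set.indicator_le_indicator_of_subset h ha s

lemma mass_indicator (a : S → ℝ) (T U : Set S) : mass (T.indicator a) U = mass a (U ∩ T) := by
  simp only [mass, Set.indicator_indicator]

lemma mass_inter_add_inter_compl (a : S → ℝ) (T U : Set S) :
    mass a (U ∩ T) + mass a (U ∩ Tᶜ) = mass a U := by
  simp only [mass, ← sum_add_distrib]
  refine sum_congr rfl fun s _ => ?_
  by_cases hU : s ∈ U <;> by_cases hT : s ∈ T <;> simp [hU, hT]

lemma mass_single (s : S) (ε : ℝ) (T : Set S) :
    mass (Pi.single s ε) T = T.indicator (fun _ => ε) s := by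
  rw [mass, Fintype.sum_eq_single s fun x hx => by simp [Set.indicator_apply, hx]]
  simp [Set.indicator_apply]

lemma mass_sub (a a' : S → ℝ) (T : Set S) : mass (a - a') T = mass a T - mass a' T := by
  simp only [mass, ← sum_sub_distrib]
  exact sum_congr rfl fun s _ => congrFun (Set.indicator_sub T a a') s

lemma mass_singleton (a : S → ℝ) (s : S) : mass a {s} = a s := by
  rw [mass, Fintype.sum_eq_single s fun x hx => by simp [hx]]
  simp

lemma mass_inter_setOf_pos (ha : ∀ s, 0 ≤ a s) (T : Set S) :
    mass a (T ∩ {s | 0 < a s}) = mass a T := by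
  refine sum_congr rfl fun s _ => ?_
  by_cases hs : 0 < a s
  · by_cases hsT : s ∈ T <;> simp [hs, hsT]
  · simp [Set.indicator_apply, (ha s).antisymm (not_lt.mp hs)]

lemma exists_mem_ne_zero_of_mass_ne_zero (h : mass a T ≠ 0) : ∃ s ∈ T, a s ≠ 0 := by
  obtain ⟨s, -, hs⟩ := exists_ne_zero_of_sum_ne_zero h
  have hsT : s ∈ T := by_contra fun hsT => hs (Set.indicator_of_notMem hsT a)
  exact ⟨s, hsT, by rwa [Set.indicator_of_mem hsT] at hs⟩

end Mass

lemma exists_eq_min_of_finite {ι : Type*} [Finite ι] (x y : ℝ) (f : ι → ℝ) :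
    ∃ ε, ε ≤ x ∧ ε ≤ y ∧ (∀ i, ε ≤ f i) ∧
      (ε = x ∨ ε = y ∨ ∃ i, ε = f i) := by
  have := Fintype.ofFinite ι
  let C : Finset ℝ := insert x (insert y (univ.image f))
  have hC : C.Nonempty := insert_nonempty _ _
  refine ⟨C.min' hC, C.min'_le _ (by simp [C]), C.min'_le _ (by simp [C]),
    fun i => C.min'_le _ (by simp [C]), ?_⟩
  simpa [C, eq_comm] using C.min'_mem hC

section Support

variable {α : Type*} {f : α → ℝ} {x : α} {ε : ℝ}

lemma support_sub_single_subset (hx : f x ≠ 0) : support (f - Pi.single x ε) ⊆ support f := by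
  intro y hy
  by_cases hyx : y = x
  · exact hyx ▸ hx
  · simpa [hyx] using hy

lemma sub_single_nonneg (hf : ∀ y, 0 ≤ f y) (hε : ε ≤ f x) (y : α) :
    0 ≤ (f - Pi.single x ε : α → ℝ) y := by
  by_cases hyx : y = x
  · simp [hyx, hε]
  · simp [hyx, hf y]

lemma ncard_support_sub_single_lt [Finite α] (hx : f x ≠ 0) (hε : f x = ε) :
    (support (f - Pi.single x ε)).ncard < (support f).ncard :=
  Set.ncard_lt_ncard ((Set.ssubset_iff_of_subset (support_sub_single_subset hx)).mpr
    ⟨x, hx, by simp [hε]⟩)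

lemma ncard_support_indicator_lt [Finite α] {T : Set α} (h : ∃ y ∉ T, f y ≠ 0) :
    (support (T.indicator f)).ncard < (support f).ncard := by
  obtain ⟨y, hyT, hy⟩ := h
  rw [Set.support_indicator]
  exact Set.ncard_lt_ncard ((Set.ssubset_iff_of_subset Set.inter_subset_right).mpr
    ⟨y, hy, fun h => hyT h.1⟩)

lemma ncard_support_indicator_le [Finite α] (T : Set α) :
    (support (T.indicator f)).ncard ≤ (support f).ncard := by
  rw [Set.support_indicator]
  exact Set.ncard_le_ncard Set.inter_subset_right

noncomputable def supportCard {S1 S2 : Type*} (a : S1 → ℝ) (b : S2 → ℝ) : ℕ :=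
  (support a).ncard + (support b).ncard

end Support

section RelImage

variable {S1 S2 : Type} (R : Set (S1 × S2))

lemma relImage_union (T U : Set S1) : relImage R (T ∪ U) = relImage R T ∪ relImage R U :=
  SetRel.image_union R T U

lemma relImage_inter_subset (T U : Set S1) :
    relImage R (T ∩ U) ⊆ relImage R T ∩ relImage R U :=
  SetRel.image_inter_subset R

lemma relImage_mono {T U : Set S1} (h : T ⊆ U) : relImage R T ⊆ relImage R U :=
  SetRel.image_subset_image h

end RelImage

section Hall

variable {S1 S2 : Type} [Fintype S1] [Fintype S2] (R : Set (S1 × S2))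

def HallCondition (a : S1 → ℝ) (b : S2 → ℝ) : Prop :=
  ∀ T, mass a T ≤ mass b (relImage R T)

structure IsFractionalMatching (a : S1 → ℝ) (b : S2 → ℝ) (w : S1 × S2 → ℝ) : Prop where
  nonneg : ∀ p, 0 ≤ w p
  mem_of_pos : ∀ p, 0 < w p → p ∈ R
  sum_row : ∀ s, ∑ t, w (s, t) = a s
  sum_col_le : ∀ t, ∑ s, w (s, t) ≤ b t

def IsCritical (a : S1 → ℝ) (b : S2 → ℝ) (T : Set S1) : Prop :=
  mass a T = mass b (relImage R T) ∧ (∃ s ∈ T, a s ≠ 0) ∧ ∃ s ∉ T, a s ≠ 0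

variable {R} {a a' : S1 → ℝ} {b b' : S2 → ℝ} {w w' : S1 × S2 → ℝ}

namespace IsFractionalMatching

lemma zero (hb : ∀ t, 0 ≤ b t) : IsFractionalMatching R 0 b 0 where
  nonneg _ := le_rfl
  mem_of_pos _ h := (lt_irrefl 0 h).elim
  sum_row _ := by simp
  sum_col_le t := by simpa using hb t

lemma add (hw : IsFractionalMatching R a b w) (hw' : IsFractionalMatching R a' b' w') :
    IsFractionalMatching R (a + a') (b + b') (w + w') where
  nonneg p := add_nonneg (hw.nonneg p) (hw'.nonneg p)
  mem_of_pos p h := by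
    rcases (hw.nonneg p).lt_or_eq with hp | hp
    · exact hw.mem_of_pos p hp
    · exact hw'.mem_of_pos p (by simpa [← hp] using h)
  sum_row s := by simp [sum_add_distrib, hw.sum_row, hw'.sum_row]
  sum_col_le t := by
    simpa [sum_add_distrib] using add_le_add (hw.sum_col_le t) (hw'.sum_col_le t)

lemma single {s : S1} {t : S2} (h : (s, t) ∈ R) {ε : ℝ} (hε : 0 ≤ ε) :
    IsFractionalMatching R (Pi.single s ε) (Pi.single t ε) (Pi.single (s, t) ε) where
  nonneg p := by by_cases hp : p = (s, t) <;> simp [hp, hε]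
  mem_of_pos p hp := by
    by_cases hp' : p = (s, t)
    · exact hp' ▸ h
    · simp [Pi.single_eq_of_ne hp'] at hp
  sum_row s' := by by_cases hs : s' = s <;> simp [Pi.single_apply, hs]
  sum_col_le t' := by by_cases ht : t' = t <;> simp [Pi.single_apply, ht]

lemma hallCondition (hw : IsFractionalMatching R a b w) : HallCondition R a b := by
  intro T
  calc mass a T = ∑ s, ∑ t, if s ∈ T then w (s, t) else 0 := by
        simp [mass, Set.indicator_apply, ← hw.sum_row]
    _ ≤ ∑ s, ∑ t, if t ∈ relImage R T then w (s, t) else 0 := by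
        refine sum_le_sum fun s _ => sum_le_sum fun t _ => ?_
        by_cases hs : s ∈ T
        · rcases (hw.nonneg (s, t)).lt_or_eq with hpos | hzero
          · simp [hs, show t ∈ relImage R T from ⟨s, hs, hw.mem_of_pos _ hpos⟩]
          · simp [← hzero]
        · simp only [hs, if_false]
          split_ifs <;> simp [hw.nonneg]
    _ = ∑ t, (relImage R T).indicator (fun t => ∑ s, w (s, t)) t := by
        rw [sum_comm]; simp [Set.indicator_apply]
    _ ≤ mass b (relImage R T) :=
        sum_le_sum fun t _ => Set.indicator_le_indicator (hw.sum_col_le t)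

lemma le_sum_row (hw : IsFractionalMatching R a b w) (p : S1 × S2) : w p ≤ a p.1 := by
  rw [← hw.sum_row]
  exact single_le_sum (fun t _ => hw.nonneg (p.1, t)) (mem_univ p.2)

lemma sum_col_eq (hw : IsFractionalMatching R a b w) (h : ∑ t, b t ≤ ∑ s, a s) (t : S2) :
    ∑ s, w (s, t) = b t := by
  have htotal : ∑ t, ∑ s, w (s, t) = ∑ t, b t := by
    refine le_antisymm (sum_le_sum fun t _ => hw.sum_col_le t) (h.trans_eq ?_)
    simp only [← hw.sum_row]
    exact sum_comm
  exact (sum_eq_sum_iff_of_le fun t _ => hw.sum_col_le t).mp htotal t (mem_univ t)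

end IsFractionalMatching

lemma hallCondition_iff_forall_subset (ha : ∀ s, 0 ≤ a s) (hb : ∀ t, 0 ≤ b t) :
    HallCondition R a b ↔ ∀ T ⊆ {s | 0 < a s}, mass a T ≤ mass b (relImage R T) := by
  refine ⟨fun hH T _ => hH T, fun h T => ?_⟩
  rw [← mass_inter_setOf_pos ha]
  exact (h _ Set.inter_subset_right).trans
    (mass_mono hb (relImage_mono R Set.inter_subset_left))

end Hall

section Matching

variable {S1 S2 : Type} [Fintype S1] [Fintype S2] {R : Set (S1 × S2)}
  {a : S1 → ℝ} {b : S2 → ℝ}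

namespace HallCondition

lemma indicator (hH : HallCondition R a b) (hb : ∀ t, 0 ≤ b t) (T : Set S1) :
    HallCondition R (T.indicator a) ((relImage R T).indicator b) := by
  intro U
  rw [mass_indicator, mass_indicator]
  exact (hH (U ∩ T)).trans (mass_mono hb (relImage_inter_subset R U T))

lemma indicator_compl (hH : HallCondition R a b) {T : Set S1}
    (hT : mass a T = mass b (relImage R T)) :
    HallCondition R (Tᶜ.indicator a) ((relImage R T)ᶜ.indicator b) := by
  intro U
  -- Hall's condition for `U ∪ T`, minus the tight equation for `T`.
  have hUT := hH (U ∪ T)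
  rw [← mass_inter_add_inter_compl a T, ← mass_inter_add_inter_compl b (relImage R T),
    relImage_union, Set.union_inter_cancel_right, Set.union_inter_cancel_right,
    Set.union_inter_distrib_right, Set.union_inter_distrib_right, Set.inter_compl_self,
    Set.inter_compl_self, Set.union_empty, Set.union_empty, hT] at hUT
  rw [mass_indicator, mass_indicator]
  linarith

lemma sub_single (hH : HallCondition R a b) {s : S1} {t : S2} (hst : (s, t) ∈ R) {ε : ℝ}
    (hε : ∀ T, s ∉ T → t ∈ relImage R T → ε ≤ mass b (relImage R T) - mass a T) :
    HallCondition R (a - Pi.single s ε) (b - Pi.single t ε) := by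
  intro T
  rw [mass_sub, mass_sub, mass_single, mass_single]
  by_cases hs : s ∈ T
  · have ht : t ∈ relImage R T := ⟨s, hs, hst⟩
    simpa [hs, ht] using hH T
  by_cases ht : t ∈ relImage R T
  · simp only [hs, ht, not_false_eq_true, Set.indicator_of_notMem, Set.indicator_of_mem]
    linarith [hε T hs ht]
  · simpa [hs, ht] using hH T

end HallCondition

lemma isCritical_of_tight {s : S1} {t : S2} {T : Set S1} (hb : ∀ t, 0 ≤ b t) (hs : a s ≠ 0)
    (hsT : s ∉ T) (ht : b t ≠ 0) (htT : t ∈ relImage R T)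
    (hT : mass a T = mass b (relImage R T)) : IsCritical R a b T := by
  have hbt : b t ≤ mass b (relImage R T) :=
    mass_singleton b t ▸ mass_mono hb (Set.singleton_subset_iff.mpr htT)
  have hmass : mass a T ≠ 0 := hT ▸ (((hb t).lt_of_ne' ht).trans_le hbt).ne'
  exact ⟨hT, exists_mem_ne_zero_of_mass_ne_zero hmass, s, hsT, hs⟩

lemma IsCritical.exists_isFractionalMatching {T : Set S1} (hT : IsCritical R a b T)
    (ha : ∀ s, 0 ≤ a s) (hb : ∀ t, 0 ≤ b t) (hH : HallCondition R a b)
    (ih : ∀ a' b', (∀ s, 0 ≤ a' s) → (∀ t, 0 ≤ b' t) → HallCondition R a' b' →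
      supportCard a' b' < supportCard a b → ∃ w, IsFractionalMatching R a' b' w) :
    ∃ w, IsFractionalMatching R a b w := by
  obtain ⟨hTight, ⟨s, hsT, hs⟩, hout⟩ := hT
  obtain ⟨w₁, hw₁⟩ := ih (T.indicator a) ((relImage R T).indicator b)
    (Set.indicator_nonneg fun s _ => ha s) (Set.indicator_nonneg fun t _ => hb t)
    (hH.indicator hb T)
    (add_lt_add_of_lt_of_le (ncard_support_indicator_lt hout) (ncard_support_indicator_le _))
  obtain ⟨w₂, hw₂⟩ := ih (Tᶜ.indicator a) ((relImage R T)ᶜ.indicator b)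
    (Set.indicator_nonneg fun s _ => ha s) (Set.indicator_nonneg fun t _ => hb t)
    (hH.indicator_compl hTight)
    (add_lt_add_of_lt_of_le (ncard_support_indicator_lt ⟨s, Set.notMem_compl_iff.mpr hsT, hs⟩)
      (ncard_support_indicator_le _))
  exact ⟨w₁ + w₂, by simpa only [Set.indicator_self_add_compl] using hw₁.add hw₂⟩

lemma HallCondition.exists_augment (hH : HallCondition R a b) (ha : ∀ s, 0 ≤ a s)
    (hb : ∀ t, 0 ≤ b t) {s : S1} (hs : a s ≠ 0) :
    ∃ t ε, (s, t) ∈ R ∧ b t ≠ 0 ∧ 0 ≤ ε ∧ ε ≤ a s ∧ ε ≤ b t ∧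
      HallCondition R (a - Pi.single s ε) (b - Pi.single t ε) ∧
      (ε = a s ∨ ε = b t ∨
        ∃ T, s ∉ T ∧ t ∈ relImage R T ∧ ε = mass b (relImage R T) - mass a T) := by
  obtain ⟨t, ⟨s', hs', hst⟩, ht⟩ : ∃ t ∈ relImage R {s}, b t ≠ 0 :=
    exists_mem_ne_zero_of_mass_ne_zero
      (((ha s).lt_of_ne' hs).trans_le (mass_singleton a s ▸ hH {s})).ne'
  replace hst : (s, t) ∈ R := hs' ▸ hst
  obtain ⟨ε, hεa, hεb, hεT, hε⟩ := exists_eq_min_of_finite (a s) (b t)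
    fun T : {T : Set S1 // s ∉ T ∧ t ∈ relImage R T} => mass b (relImage R T) - mass a T
  have hε0 : 0 ≤ ε := by
    rcases hε with rfl | rfl | ⟨T, rfl⟩
    exacts [ha s, hb t, sub_nonneg.mpr (hH T)]
  refine ⟨t, ε, hst, ht, hε0, hεa, hεb,
    hH.sub_single hst fun T hsT htT => hεT ⟨T, hsT, htT⟩, ?_⟩
  simpa only [Subtype.exists, exists_prop, and_assoc] using hε

lemma HallCondition.exists_isFractionalMatching_of_ne_zero (hH : HallCondition R a b)
    (ha : ∀ s, 0 ≤ a s) (hb : ∀ t, 0 ≤ b t) {s : S1} (hs : a s ≠ 0)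
    (ih : ∀ a' b', (∀ s, 0 ≤ a' s) → (∀ t, 0 ≤ b' t) → HallCondition R a' b' →
      supportCard a' b' < supportCard a b → ∃ w, IsFractionalMatching R a' b' w) :
    ∃ w, IsFractionalMatching R a b w := by
  obtain ⟨t, ε, hst, ht, hε0, hεa, hεb, hH', hε⟩ := hH.exists_augment ha hb hs
  set a' := a - Pi.single s ε
  set b' := b - Pi.single t ε
  have hle_a := Set.ncard_le_ncard (support_sub_single_subset (ε := ε) hs)
  have hle_b := Set.ncard_le_ncard (support_sub_single_subset (ε := ε) ht)
  have hle : supportCard a' b' ≤ supportCard a b := add_le_add hle_a hle_b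
  obtain ⟨w, hw⟩ : ∃ w, IsFractionalMatching R a' b' w := by
    have ha' := sub_single_nonneg ha hεa
    have hb' := sub_single_nonneg hb hεb
    by_cases hlt : supportCard a' b' < supportCard a b
    · exact ih a' b' ha' hb' hH' hlt
    have has : a s ≠ ε := fun h =>
      hlt (add_lt_add_of_lt_of_le (ncard_support_sub_single_lt hs h) hle_b)
    have hbt : b t ≠ ε := fun h =>
      hlt (add_lt_add_of_le_of_lt hle_a (ncard_support_sub_single_lt ht h))
    obtain ⟨T, hsT, htT, hT⟩ := (hε.resolve_left has.symm).resolve_left hbt.symm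
    have hcrit : IsCritical R a' b' T := by
      refine isCritical_of_tight hb' (by simpa [a'] using sub_ne_zero.mpr has) hsT
        (by simpa [b'] using sub_ne_zero.mpr hbt) htT ?_
      simp only [a', b', mass_sub, mass_single, Set.indicator_of_notMem hsT,
        Set.indicator_of_mem htT]
      linarith
    exact hcrit.exists_isFractionalMatching ha' hb' hH'
      fun a'' b'' ha'' hb'' hH'' hlt'' => ih a'' b'' ha'' hb'' hH'' (hlt''.trans_le hle)
  exact ⟨w + Pi.single (s, t) ε, by simpa [a', b'] using hw.add (.single hst hε0)⟩

theorem HallCondition.exists_isFractionalMatching (hH : HallCondition R a b)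
    (ha : ∀ s, 0 ≤ a s) (hb : ∀ t, 0 ≤ b t) : ∃ w, IsFractionalMatching R a b w := by
  induction hn : supportCard a b using Nat.strong_induction_on generalizing a b with
  | _ n ih =>
  by_cases ha0 : a = 0
  · exact ⟨0, ha0 ▸ .zero hb⟩
  obtain ⟨s, hs⟩ := Function.ne_iff.mp ha0
  exact hH.exists_isFractionalMatching_of_ne_zero ha hb hs
    fun a' b' ha' hb' hH' hlt => ih _ (hn ▸ hlt) hH' ha' hb' rfl

end Matching

lemma FDist.pmf_le_one {S : Type} [Fintype S] (μ : FDist S) (s : S) : μ.pmf s ≤ 1 :=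
  μ.sum_one ▸ single_le_sum (fun t _ => μ.nonneg t) (mem_univ s)

/-- Hall-type characterization of the weight-function lifting: a weight function
for `μ1`, `μ2`, `R` exists iff every subset of the support of `μ1` satisfies
`μ1(T) ≤ μ2(R(T))`. -/
theorem hasWeight_iff_hall {S1 S2 : Type} [Fintype S1] [Fintype S2]
    (R : Set (S1 × S2)) (μ1 : FDist S1) (μ2 : FDist S2) :
    hasWeight R μ1 μ2 ↔ ∀ T ⊆ μ1.supp, μ1.prob T ≤ μ2.prob (relImage R T) := by
  refine Iff.trans ?_ (hallCondition_iff_forall_subset (R := R) μ1.nonneg μ2.nonneg)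
  constructor
  · rintro ⟨w, hw01, hrow, hcol, hR⟩
    exact IsFractionalMatching.hallCondition
      ⟨fun p => (hw01 p).1, hR, fun s => (hrow s).symm, fun t => (hcol t).ge⟩
  · intro hH
    obtain ⟨w, hw⟩ := hH.exists_isFractionalMatching μ1.nonneg μ2.nonneg
    have hcol := hw.sum_col_eq (by rw [μ1.sum_one, μ2.sum_one])
    exact ⟨w, fun p => ⟨hw.nonneg p, (hw.le_sum_row p).trans (μ1.pmf_le_one _)⟩,
      fun s => (hw.sum_row s).symm, fun t => (hcol t).symm, hw.mem_of_pos⟩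
end

section
/- Strong simulation is compositional: if L1 ≼ L2 with α2 ⊆ α1, then for every LPTS L, L1 ∥ L ≼ L2 ∥ L; moreover if R12 is a strong simulation witnessing L1 ≼ L2, then R = {((s1,s),(s2,s)) | s1 R12 s2, s ∈ S_L} is a strong simulation between L1 ∥ L and L2 ∥ L. -/
open Classical

/-- Parallel composition of LPTSes (Segala–Lynch). -/
noncomputable def par {S1 S2 Act : Type} [Fintype S1] [Fintype S2]
    (L1 : LPTS S1 Act) (L2 : LPTS S2 Act) : LPTS (S1 × S2) Act where
  start := (L1.start, L2.start)
  alpha := L1.alpha ∪ L2.alpha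
  trans p a := {μ |
    (∃ μ1 ∈ L1.trans p.1 a, ∃ μ2 ∈ L2.trans p.2 a, μ = μ1.prod μ2) ∨
    (∃ μ1 ∈ L1.trans p.1 a, a ∉ L2.alpha ∧ μ = μ1.prod (FDist.dirac p.2)) ∨
    (a ∉ L1.alpha ∧ ∃ μ2 ∈ L2.trans p.2 a, μ = (FDist.dirac p.1).prod μ2)}
  trans_mem := by
    rintro p a μ (⟨μ1, h1, -⟩ | ⟨μ1, h1, -⟩ | ⟨-, μ2, h2, -⟩)
    · exact Or.inl (L1.trans_mem _ _ _ h1)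
    · exact Or.inl (L1.trans_mem _ _ _ h1)
    · exact Or.inr (L2.trans_mem _ _ _ h2)
  finite_trans := by
    intro p a
    apply Set.Finite.subset (Set.Finite.union (Set.Finite.union
      (Set.Finite.image (fun q : FDist S1 × FDist S2 => q.1.prod q.2)
        (Set.Finite.prod (L1.finite_trans p.1 a) (L2.finite_trans p.2 a)))
      (Set.Finite.image (fun μ1 => μ1.prod (FDist.dirac p.2)) (L1.finite_trans p.1 a)))
      (Set.Finite.image (fun μ2 => (FDist.dirac p.1).prod μ2) (L2.finite_trans p.2 a)))
    rintro μ (⟨μ1, h1, μ2, h2, rfl⟩ | ⟨μ1, h1, -, rfl⟩ | ⟨-, μ2, h2, rfl⟩)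
    · exact Or.inl (Or.inl ⟨(μ1, μ2), Set.mk_mem_prod h1 h2, rfl⟩)
    · exact Or.inl (Or.inr ⟨μ1, h1, rfl⟩)
    · exact Or.inr ⟨μ2, h2, rfl⟩

/-!
A move of `L1 ∥ L` from `(s1, s)` is matched by a move of `L2 ∥ L` from `(s2, s)` of the same
kind: a move involving `L1` by the `R12`-matching move of `L2`, and a move of `L` alone
(`a ∉ α1`, hence `a ∉ α2`) by `L2` standing still, where the Dirac distributions are related
because `s1 R12 s2`. It remains that `μ1 ⊑ μ2` implies `μ1 ⊗ ν ⊑ μ2 ⊗ ν` for the relation pairing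
equal `L`-components: slicing a set of pairs along its `L`-coordinate reduces this to
`μ1 ⊑ μ2` applied to each slice, weighted by `ν`.
-/

namespace FDist

variable {S S1 S2 : Type} [Fintype S] [Fintype S1] [Fintype S2]

lemma prob_mono (μ : FDist S) {T T' : Set S} (h : T ⊆ T') : μ.prob T ≤ μ.prob T' := by
  refine Finset.sum_le_sum fun s _ => ?_
  split_ifs with hT hT'
  exacts [le_rfl, absurd (h hT) hT', μ.nonneg s, le_rfl]

lemma prob_dirac (s : S) (T : Set S) : (dirac s).prob T = if s ∈ T then 1 else 0 := by
  rw [prob, Finset.sum_eq_single s (fun t _ ht => by simp [dirac, ht]) (by simp)]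
  simp [dirac]

lemma prob_prod (μ : FDist S1) (ν : FDist S2) (T : Set (S1 × S2)) :
    (μ.prod ν).prob T = ∑ t, ν.pmf t * μ.prob {s | (s, t) ∈ T} := by
  simp only [prob, Fintype.sum_prod_type_right, Finset.mul_sum, prod, Set.mem_ofPred_eq]
  refine Finset.sum_congr rfl fun t _ => Finset.sum_congr rfl fun s _ => ?_
  split_ifs <;> ring

lemma mem_supp_of_mem_supp_prod {μ : FDist S1} {ν : FDist S2} {p : S1 × S2}
    (hp : p ∈ (μ.prod ν).supp) : p.1 ∈ μ.supp :=
  pos_of_mul_pos_left hp (ν.nonneg p.2)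

end FDist

lemma liftRel_dirac {S1 S2 : Type} [Fintype S1] [Fintype S2] {R : Set (S1 × S2)}
    {s1 : S1} {s2 : S2} (h : (s1, s2) ∈ R) :
    liftRel R (FDist.dirac s1) (FDist.dirac s2) := by
  intro T _
  rw [FDist.prob_dirac, FDist.prob_dirac]
  by_cases h1 : s1 ∈ T
  · simp [h1, show s2 ∈ relImage R T from ⟨s1, h1, h⟩]
  · simp only [h1, if_false]
    split_ifs <;> norm_num

def relParRight {S1 S2 S : Type} (R : Set (S1 × S2)) : Set ((S1 × S) × (S2 × S)) :=
  {p | (p.1.1, p.2.1) ∈ R ∧ p.1.2 = p.2.2}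

lemma liftRel_prod {S1 S2 S : Type} [Fintype S1] [Fintype S2] [Fintype S]
    {R : Set (S1 × S2)} {μ1 : FDist S1} {μ2 : FDist S2} (h : liftRel R μ1 μ2) (ν : FDist S) :
    liftRel (relParRight R) (μ1.prod ν) (μ2.prod ν) := by
  intro T hT
  rw [FDist.prob_prod, FDist.prob_prod]
  refine Finset.sum_le_sum fun t _ => mul_le_mul_of_nonneg_left ?_ (ν.nonneg t)
  calc μ1.prob {s | (s, t) ∈ T}
      ≤ μ2.prob (relImage R {s | (s, t) ∈ T}) :=
        h _ fun s hs => FDist.mem_supp_of_mem_supp_prod (hT hs)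
    _ ≤ μ2.prob {s | (s, t) ∈ relImage (relParRight R) T} := by
        refine FDist.prob_mono _ ?_
        rintro s2 ⟨s1, hs1, hR⟩
        exact ⟨(s1, t), hs1, hR, rfl⟩

lemma StrongSim.par {S1 S2 S Act : Type} [Fintype S1] [Fintype S2] [Fintype S]
    {L1 : LPTS S1 Act} {L2 : LPTS S2 Act} {R : Set (S1 × S2)} (hR : StrongSim L1 L2 R)
    (halpha : L2.alpha ⊆ L1.alpha) (L : LPTS S Act) :
    StrongSim (par L1 L) (par L2 L) (relParRight R) := by
  rintro ⟨s1, s⟩ ⟨s2, s'⟩ ⟨hs12, rfl : s = s'⟩ a μ hμ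
  rcases hμ with ⟨μ1, h1, ν, hν, rfl⟩ | ⟨μ1, h1, ha, rfl⟩ | ⟨ha, ν, hν, rfl⟩
  · obtain ⟨μ2, h2, hlift⟩ := hR s1 s2 hs12 a μ1 h1
    exact ⟨μ2.prod ν, Or.inl ⟨μ2, h2, ν, hν, rfl⟩, liftRel_prod hlift ν⟩
  · obtain ⟨μ2, h2, hlift⟩ := hR s1 s2 hs12 a μ1 h1
    exact ⟨μ2.prod (FDist.dirac s), Or.inr (Or.inl ⟨μ2, h2, ha, rfl⟩), liftRel_prod hlift _⟩
  · exact ⟨(FDist.dirac s2).prod ν, Or.inr (Or.inr ⟨fun h => ha (halpha h), ν, hν, rfl⟩),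
      liftRel_prod (liftRel_dirac hs12) ν⟩

/-- Strong simulation is compositional: if `L1 ≼ L2` with `α2 ⊆ α1`, then
`L1 ∥ L ≼ L2 ∥ L`; moreover the lifted relation pairing equal `L`-components is
a strong simulation between the compositions. -/
theorem sim_compositional {S1 S2 SL Act : Type} [Fintype S1] [Fintype S2] [Fintype SL]
    (L1 : LPTS S1 Act) (L2 : LPTS S2 Act) (L : LPTS SL Act)
    (halpha : L2.alpha ⊆ L1.alpha) :
    (Sim L1 L2 → Sim (par L1 L) (par L2 L)) ∧
    ∀ R12 : Set (S1 × S2), StrongSim L1 L2 R12 →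
      StrongSim (par L1 L) (par L2 L)
        {p : (S1 × SL) × (S2 × SL) | (p.1.1, p.2.1) ∈ R12 ∧ p.1.2 = p.2.2} :=
  ⟨fun ⟨R12, hR, hstart⟩ => ⟨relParRight R12, hR.par halpha L, hstart, rfl⟩,
    fun _ hR => hR.par halpha L⟩
end

section
/- Any execution mapping from an LPTS C to an LPTS L is a strong simulation; consequently if C has an execution mapping to L then C ≼ L. -/
open Classical

/-- `M` is an execution mapping from `C` to `L`: every transition of `C` is
matched by a transition of `L` from `M c` whose distribution agrees with that of
`C` under the injective restriction of `M` to the support. -/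
def ExecMap {S1 S2 Act : Type} [Fintype S1] [Fintype S2]
    (M : S1 → S2) (C : LPTS S1 Act) (L : LPTS S2 Act) : Prop :=
  ∀ c a μc, μc ∈ C.trans c a → ∃ μ ∈ L.trans (M c) a,
    Set.InjOn M μc.supp ∧ ∀ c' ∈ μc.supp, μc.pmf c' = μ.pmf (M c')

/-! Under the graph relation of `M` the image `R(T)` is `M '' T`, and since `M` is injective on
the support of `μc` and carries its weights to those of `μ`, `μ (M '' T) = μc T`: the lifting
condition holds with equality. -/

namespace FDist

variable {S1 S2 : Type} [Fintype S1] [Fintype S2]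

theorem prob_image_eq {μ : FDist S1} {ν : FDist S2} {M : S1 → S2} {T : Set S1}
    (hinj : Set.InjOn M T) (hpmf : ∀ c ∈ T, μ.pmf c = ν.pmf (M c)) :
    ν.prob (M '' T) = μ.prob T := by
  have himage : Finset.univ.filter (· ∈ M '' T) = (Finset.univ.filter (· ∈ T)).image M := by
    ext t
    simp
  simp only [prob, ← Finset.sum_filter, himage]
  rw [Finset.sum_image fun x hx y hy hxy => hinj (by simpa using hx) (by simpa using hy) hxy]
  exact Finset.sum_congr rfl fun c hc => (hpmf c (by simpa using hc)).symm

end FDist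

theorem relImage_graph {S1 S2 : Type} (M : S1 → S2) (T : Set S1) :
    relImage {p : S1 × S2 | p.2 = M p.1} T = M '' T := by
  ext t
  simp [relImage, eq_comm]

theorem liftRel_graph_of_injOn {S1 S2 : Type} [Fintype S1] [Fintype S2]
    {M : S1 → S2} {μ : FDist S1} {ν : FDist S2} (hinj : Set.InjOn M μ.supp)
    (hpmf : ∀ c ∈ μ.supp, μ.pmf c = ν.pmf (M c)) :
    liftRel {p : S1 × S2 | p.2 = M p.1} μ ν := by
  intro T hT
  rw [relImage_graph]
  exact (FDist.prob_image_eq (hinj.mono hT) fun c hc => hpmf c (hT hc)).ge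

theorem ExecMap.strongSim {S1 S2 Act : Type} [Fintype S1] [Fintype S2]
    {M : S1 → S2} {C : LPTS S1 Act} {L : LPTS S2 Act} (h : ExecMap M C L) :
    StrongSim C L {p : S1 × S2 | p.2 = M p.1} := by
  rintro c _ hR a μc hμc
  obtain rfl : _ = M c := hR
  obtain ⟨μ, hμ, hinj, hpmf⟩ := h c a μc hμc
  exact ⟨μ, hμ, liftRel_graph_of_injOn hinj hpmf⟩

/-- Any execution mapping is a strong simulation; hence if `C` has an execution
mapping to `L` (sending start to start) then `C ≼ L`. -/
theorem execMap_strongSim {S1 S2 Act : Type} [Fintype S1] [Fintype S2]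
    (M : S1 → S2) (C : LPTS S1 Act) (L : LPTS S2 Act) (h : ExecMap M C L) :
    StrongSim C L {p : S1 × S2 | p.2 = M p.1} ∧
    (M C.start = L.start → Sim C L) :=
  ⟨h.strongSim, fun hstart => ⟨_, h.strongSim, hstart.symm⟩⟩
end
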